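/- Let G be a graph whose complement contains no K_4. Let P_1 be a longest path in G, let P_2 be a longest path in G restricted to V(G) \ V(P_1), and let P_3 be a longest path in G restricted to V(G) \ (V(P_1) ∪ V(P_2)). Then V(G) = V(P_1) ∪ V(P_2) ∪ V(P_3). -/

import Mathlib

/-!
The first vertex of a longest path inside a vertex set `S` has no neighbour in `S` off the path,
since the path could otherwise be extended at that end. If some vertex `v` lay outside the three
paths, then the first vertices of the three paths together with `v` would be pairwise
nonadjacent: four vertices spanning a `K₄` in the complement.
-/

namespace SimpleGraph

variable {V : Type*} (G : SimpleGraph V)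

def IsLongestPathIn (p : V → Prop) (l : List V) : Prop :=
  l.IsChain G.Adj ∧ l.Nodup ∧ (∀ v ∈ l, p v) ∧
    ∀ l' : List V, l'.IsChain G.Adj → l'.Nodup → (∀ v ∈ l', p v) → l'.length ≤ l.length

variable {G}

theorem IsLongestPathIn.ne_nil {p : V → Prop} {l : List V} (hl : G.IsLongestPathIn p l)
    {v : V} (hv : p v) : l ≠ [] := by
  rintro rfl
  simpa using hl.2.2.2 [v] (List.isChain_singleton v) (List.nodup_singleton v) (by simpa)

theorem IsLongestPathIn.not_adj_head {p : V → Prop} {a : V} {t : List V}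
    (hl : G.IsLongestPathIn p (a :: t)) {w : V} (hw : w ∉ a :: t) (hpw : p w) :
    ¬ G.Adj a w := by
  obtain ⟨hchain, hnodup, hp, hmax⟩ := hl
  intro haw
  have hext := hmax (w :: a :: t) (List.isChain_cons_cons.mpr ⟨haw.symm, hchain⟩)
    (List.nodup_cons.mpr ⟨hw, hnodup⟩) (List.forall_mem_cons.mpr ⟨hpw, hp⟩)
  simp at hext

theorem IsLongestPathIn.exists_mem_forall_not_adj {p : V → Prop} {l : List V}
    (hl : G.IsLongestPathIn p l) {v : V} (hv : p v) :
    ∃ a ∈ l, ∀ w, w ∉ l → p w → ¬ G.Adj a w := by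
  obtain ⟨a, t, rfl⟩ := List.exists_cons_of_ne_nil (hl.ne_nil hv)
  exact ⟨a, List.mem_cons_self, fun _ hw hpw => hl.not_adj_head hw hpw⟩

end SimpleGraph

theorem iterated_longest_paths_cover_general {V : Type*} (G : SimpleGraph V)
    (hK4 : ¬ ∃ a b c d : V, [a, b, c, d].Nodup ∧
      ¬ G.Adj a b ∧ ¬ G.Adj a c ∧ ¬ G.Adj a d ∧ ¬ G.Adj b c ∧ ¬ G.Adj b d ∧ ¬ G.Adj c d)
    (l1 l2 l3 : List V)
    (h1 : l1.Chain' G.Adj) (h1' : l1.Nodup)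
    (h1max : ∀ l : List V, l.Chain' G.Adj → l.Nodup → l.length ≤ l1.length)
    (h2 : l2.Chain' G.Adj) (h2' : l2.Nodup) (h2d : ∀ v ∈ l2, v ∉ l1)
    (h2max : ∀ l : List V, l.Chain' G.Adj → l.Nodup → (∀ v ∈ l, v ∉ l1) →
      l.length ≤ l2.length)
    (h3 : l3.Chain' G.Adj) (h3' : l3.Nodup) (h3d : ∀ v ∈ l3, v ∉ l1 ∧ v ∉ l2)
    (h3max : ∀ l : List V, l.Chain' G.Adj → l.Nodup → (∀ v ∈ l, v ∉ l1 ∧ v ∉ l2) →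
      l.length ≤ l3.length) :
    ∀ v : V, v ∈ l1 ∨ v ∈ l2 ∨ v ∈ l3 := by
  intro v
  by_contra! hv
  obtain ⟨hv1, hv2, hv3⟩ := hv
  have hP1 : G.IsLongestPathIn (fun _ => True) l1 :=
    ⟨h1, h1', fun _ _ => trivial, fun l hc hn _ => h1max l hc hn⟩
  have hP2 : G.IsLongestPathIn (· ∉ l1) l2 := ⟨h2, h2', h2d, h2max⟩
  have hP3 : G.IsLongestPathIn (fun w => w ∉ l1 ∧ w ∉ l2) l3 := ⟨h3, h3', h3d, h3max⟩
  obtain ⟨a, ha, hna⟩ := hP1.exists_mem_forall_not_adj (v := v) trivial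
  obtain ⟨b, hb, hnb⟩ := hP2.exists_mem_forall_not_adj hv1
  obtain ⟨c, hc, hnc⟩ := hP3.exists_mem_forall_not_adj ⟨hv1, hv2⟩
  obtain ⟨hc1, hc2⟩ := h3d c hc
  have hb1 := h2d b hb
  refine hK4 ⟨a, b, c, v, ?_, hna b hb1 trivial, hna c hc1 trivial, hna v hv1 trivial,
    hnb c hc2 hc1, hnb v hv2 hv1, hnc v hv3 ⟨hv1, hv2⟩⟩
  have hab : a ≠ b := by rintro rfl; exact hb1 ha
  have hac : a ≠ c := by rintro rfl; exact hc1 ha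
  have hav : a ≠ v := by rintro rfl; exact hv1 ha
  have hbc : b ≠ c := by rintro rfl; exact hc2 hb
  have hbv : b ≠ v := by rintro rfl; exact hv2 hb
  have hcv : c ≠ v := by rintro rfl; exact hv3 hc
  simp [hab, hac, hav, hbc, hbv, hcv]

/-- If the complement of `G` contains no `K₄`, `P₁` is a longest path in `G`, `P₂` is a longest
path avoiding `P₁`, and `P₃` is a longest path avoiding `P₁` and `P₂`, then the three paths
cover all vertices. -/
theorem iterated_longest_paths_cover {V : Type*} [Fintype V] (G : SimpleGraph V)
    (hK4 : ¬ ∃ a b c d : V, [a, b, c, d].Nodup ∧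
      ¬ G.Adj a b ∧ ¬ G.Adj a c ∧ ¬ G.Adj a d ∧ ¬ G.Adj b c ∧ ¬ G.Adj b d ∧ ¬ G.Adj c d)
    (l1 l2 l3 : List V)
    (h1 : l1.Chain' G.Adj) (h1' : l1.Nodup)
    (h1max : ∀ l : List V, l.Chain' G.Adj → l.Nodup → l.length ≤ l1.length)
    (h2 : l2.Chain' G.Adj) (h2' : l2.Nodup) (h2d : ∀ v ∈ l2, v ∉ l1)
    (h2max : ∀ l : List V, l.Chain' G.Adj → l.Nodup → (∀ v ∈ l, v ∉ l1) →
      l.length ≤ l2.length)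
    (h3 : l3.Chain' G.Adj) (h3' : l3.Nodup) (h3d : ∀ v ∈ l3, v ∉ l1 ∧ v ∉ l2)
    (h3max : ∀ l : List V, l.Chain' G.Adj → l.Nodup → (∀ v ∈ l, v ∉ l1 ∧ v ∉ l2) →
      l.length ≤ l3.length) :
    ∀ v : V, v ∈ l1 ∨ v ∈ l2 ∨ v ∈ l3 :=
  iterated_longest_paths_cover_general G hK4 l1 l2 l3 h1 h1' h1max h2 h2' h2d h2max h3 h3' h3d h3max
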